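/- A formula A is satisfiable (true under some valuation) if and only if some clique of A contains no complementary pair of literals. -/

import Mathlib

/-- Literals: propositional variables and their negations. -/
inductive Lit where
  | pos : Nat → Lit
  | neg : Nat → Lit
deriving DecidableEq

/-- Formulas of classical propositional logic, built from literals by binary ∧ and ∨. -/
inductive Formula where
  | lit : Lit → Formula
  | and : Formula → Formula → Formula
  | or  : Formula → Formula → Formula

/-- Leaves of the parse tree, identified by their positions (paths: `false` = left,
`true` = right). -/
def Formula.leaves : Formula → Set (List Bool)
  | .lit _ => {[]}
  | .and A B => (fun p => false :: p) '' A.leaves ∪ (fun p => true :: p) '' B.leaves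
  | .or A B  => (fun p => false :: p) '' A.leaves ∪ (fun p => true :: p) '' B.leaves

/-- The literal labelling the leaf at a given path, if any. -/
def Formula.labelAt : Formula → List Bool → Option Lit
  | .lit l, [] => some l
  | .and A B, b :: p => if b then B.labelAt p else A.labelAt p
  | .or A B, b :: p => if b then B.labelAt p else A.labelAt p
  | _, _ => none

/-- ∨-resolutions of a formula: delete one argument subtree at each ∨-vertex. -/
inductive Res : Formula → Type where
  | lit : (l : Lit) → Res (.lit l)
  | and : {A B : Formula} → Res A → Res B → Res (.and A B)
  | orL : {A B : Formula} → Res A → Res (.or A B)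
  | orR : {A B : Formula} → Res B → Res (.or A B)

/-- The set of leaves of `A` retained by an ∨-resolution. -/
def Res.leafSet : {A : Formula} → Res A → Set (List Bool)
  | _, .lit _ => {[]}
  | _, .and ra rb => (fun p => false :: p) '' ra.leafSet ∪ (fun p => true :: p) '' rb.leafSet
  | _, .orL ra => (fun p => false :: p) '' ra.leafSet
  | _, .orR rb => (fun p => true :: p) '' rb.leafSet

/-- Cliques: leaf sets of ∨-resolutions. -/
def Formula.cliques (A : Formula) : Set (Set (List Bool)) :=
  {L | ∃ r : Res A, r.leafSet = L}

/-- ∧-resolutions of a formula: delete one argument subtree at each ∧-vertex. -/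
inductive CoRes : Formula → Type where
  | lit : (l : Lit) → CoRes (.lit l)
  | or : {A B : Formula} → CoRes A → CoRes B → CoRes (.or A B)
  | andL : {A B : Formula} → CoRes A → CoRes (.and A B)
  | andR : {A B : Formula} → CoRes B → CoRes (.and A B)

/-- The set of leaves of `A` retained by an ∧-resolution. -/
def CoRes.leafSet : {A : Formula} → CoRes A → Set (List Bool)
  | _, .lit _ => {[]}
  | _, .or ra rb => (fun p => false :: p) '' ra.leafSet ∪ (fun p => true :: p) '' rb.leafSet
  | _, .andL ra => (fun p => false :: p) '' ra.leafSet
  | _, .andR rb => (fun p => true :: p) '' rb.leafSet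

/-- Co-cliques: leaf sets of ∧-resolutions. -/
def Formula.cocliques (A : Formula) : Set (Set (List Bool)) :=
  {M | ∃ r : CoRes A, r.leafSet = M}

/-- Truth of a literal under a valuation. -/
def Lit.eval (v : Nat → Bool) : Lit → Bool
  | .pos n => v n
  | .neg n => !(v n)

/-- Standard Boolean semantics. -/
def Formula.eval (v : Nat → Bool) : Formula → Bool
  | .lit l => l.eval v
  | .and A B => A.eval v && B.eval v
  | .or A B => A.eval v || B.eval v

/-- Number of ∨-vertices in the parse tree. -/
def Formula.orCount : Formula → Nat
  | .lit _ => 0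
  | .and A B => A.orCount + B.orCount
  | .or A B => A.orCount + B.orCount + 1

/-- Number of ∧-vertices in the parse tree. -/
def Formula.andCount : Formula → Nat
  | .lit _ => 0
  | .and A B => A.andCount + B.andCount + 1
  | .or A B => A.andCount + B.andCount

/-- Complement of a literal. -/
def Lit.compl : Lit → Lit
  | .pos n => .neg n
  | .neg n => .pos n

/-- De Morgan dual: swap ∧ with ∨ and negate every literal. -/
def Formula.dual : Formula → Formula
  | .lit l => .lit l.compl
  | .and A B => .or A.dual B.dual
  | .or A B => .and A.dual B.dual

/-!
A formula is true under `v` exactly when some ∨-resolution has all its leaves true under `v`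
(choose, at each true ∨-vertex, a true argument). So `A` is satisfiable iff the literal set of
some clique is satisfiable, and a set of literals is satisfiable iff it contains no
complementary pair: make `n` true exactly when `pos n` occurs.
-/

theorem Lit.exists_forall_eval_iff (S : Set Lit) :
    (∃ v : Nat → Bool, ∀ l ∈ S, l.eval v = true) ↔ ¬ ∃ n, Lit.pos n ∈ S ∧ Lit.neg n ∈ S := by
  constructor
  · rintro ⟨v, hv⟩ ⟨n, hpos, hneg⟩
    have hv_pos : v n = true := hv _ hpos
    have hv_neg : (!v n) = true := hv _ hneg
    simp [hv_pos] at hv_neg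
  · intro hS
    classical
    refine ⟨fun n => decide (Lit.pos n ∈ S), ?_⟩
    rintro (n | n) hl
    · simpa [Lit.eval] using hl
    · simpa [Lit.eval] using fun hpos => hS ⟨n, hpos, hl⟩

namespace Res

variable {A B : Formula}

def lits (r : Res A) : Set Lit :=
  {l | ∃ p ∈ r.leafSet, A.labelAt p = some l}

@[simp]
theorem lits_lit (l : Lit) : (Res.lit l).lits = {l} := by
  simp [Res.lits, Res.leafSet, Formula.labelAt]

@[simp]
theorem lits_and (ra : Res A) (rb : Res B) : (Res.and ra rb).lits = ra.lits ∪ rb.lits := by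
  ext l
  simp [Res.lits, Res.leafSet, Formula.labelAt, or_and_right, exists_or]

@[simp]
theorem lits_orL (ra : Res A) : (Res.orL (B := B) ra).lits = ra.lits := by
  ext l
  simp [Res.lits, Res.leafSet, Formula.labelAt]

@[simp]
theorem lits_orR (rb : Res B) : (Res.orR (A := A) rb).lits = rb.lits := by
  ext l
  simp [Res.lits, Res.leafSet, Formula.labelAt]

end Res

theorem Formula.eval_eq_true_iff_exists_res (v : Nat → Bool) (A : Formula) :
    A.eval v = true ↔ ∃ r : Res A, ∀ l ∈ r.lits, l.eval v = true := by
  induction A with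
  | lit l =>
    refine ⟨fun h => ⟨.lit l, by simpa [Formula.eval] using h⟩, ?_⟩
    rintro ⟨r, hr⟩
    cases r
    simpa [Formula.eval] using hr
  | and A B ihA ihB =>
    simp only [Formula.eval, Bool.and_eq_true, ihA, ihB]
    constructor
    · rintro ⟨⟨ra, ha⟩, rb, hb⟩
      exact ⟨.and ra rb, by simpa [or_imp, forall_and] using And.intro ha hb⟩
    · rintro ⟨r, hr⟩
      cases r with
      | and ra rb =>
        simp only [Res.lits_and, Set.mem_union, or_imp, forall_and] at hr
        exact ⟨⟨ra, hr.1⟩, rb, hr.2⟩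
  | or A B ihA ihB =>
    simp only [Formula.eval, Bool.or_eq_true, ihA, ihB]
    constructor
    · rintro (⟨ra, ha⟩ | ⟨rb, hb⟩)
      · exact ⟨.orL ra, by simpa using ha⟩
      · exact ⟨.orR rb, by simpa using hb⟩
    · rintro ⟨r, hr⟩
      cases r with
      | orL ra => exact Or.inl ⟨ra, by simpa using hr⟩
      | orR rb => exact Or.inr ⟨rb, by simpa using hr⟩

theorem satisfiable_iff_clique (A : Formula) :
    (∃ v : Nat → Bool, A.eval v = true) ↔
      ∃ L ∈ A.cliques, ¬ ∃ p ∈ L, ∃ q ∈ L, ∃ n : Nat,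
        A.labelAt p = some (.pos n) ∧ A.labelAt q = some (.neg n) := by
  calc (∃ v : Nat → Bool, A.eval v = true)
      ↔ ∃ r : Res A, ∃ v : Nat → Bool, ∀ l ∈ r.lits, l.eval v = true := by
        simp only [Formula.eval_eq_true_iff_exists_res]
        exact exists_comm
    _ ↔ ∃ r : Res A, ¬ ∃ n, Lit.pos n ∈ r.lits ∧ Lit.neg n ∈ r.lits := by
        simp only [Lit.exists_forall_eval_iff]
    _ ↔ _ := by
        simp only [Formula.cliques, Res.lits, Set.mem_ofPred_eq, exists_exists_eq_and]
        refine exists_congr fun r => not_congr ?_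
        constructor
        · rintro ⟨n, ⟨p, hp, hpos⟩, q, hq, hneg⟩
          exact ⟨p, hp, q, hq, n, hpos, hneg⟩
        · rintro ⟨p, hp, q, hq, n, hpos, hneg⟩
          exact ⟨n, ⟨p, hp, hpos⟩, q, hq, hneg⟩
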